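/- Let C_MN(m, Q) = ∑ over functions e : [m] → [Q] of ∏_{a=1}^Q (n_a(e)/m)^{n_a(e)}, where n_a(e) is the number of i with e(i) = a (with 0^0 = 1). Then C_MN(m, 1) = 1 and for Q ≥ 3 the recursion C_MN(m, Q) = C_MN(m, Q-1) + (m/(Q-2)) C_MN(m, Q-2) holds. -/

import Mathlib

open Finset

/-! With `B = ∑ n^n x^n / n!`, the general Leibniz rule for the `m`-th derivative of `B^Q` gives
`m! [x^m] B^Q = ∑_e ∏_a n_a(e)^(n_a(e)) = m^m C_MN(m, Q)`. Let `T = ∑_{n ≥ 1} n^(n-1) x^n / n!` be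
the tree function. Termwise `x T' = B - 1`, and an Abel-type identity, proved by differentiating in
`y` and evaluating at `y = 0` via forward differences, gives `B (1 - T) = 1`. Differentiating the
latter yields `x B' = B^3 - B^2`, hence `x (B^(q+1))' = (q + 1) (B^(q+3) - B^(q+2))`, whose `m`-th
coefficient is the recursion. -/

/-- The multinomial Shtarkov sum `C_MN(m, Q) = ∑_{e : [m] → [Q]} ∏_a (n_a(e)/m)^(n_a(e))`,
where `n_a(e) = #{i : e i = a}` (convention `0^0 = 1`). -/
noncomputable def CMN (m Q : ℕ) : ℝ :=
  ∑ e : Fin m → Fin Q, ∏ a : Fin Q,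
    (((Finset.univ.filter (fun i => e i = a)).card : ℝ) / m) ^
      (Finset.univ.filter (fun i => e i = a)).card

open Nat PowerSeries

section Leibniz

variable {R A ι : Type*} [CommSemiring R] [CommSemiring A] [Algebra R A] [DecidableEq ι]

theorem Derivation.map_prod_eq_sum_update (D : Derivation R A A) (s : Finset ι) (g : ι → A) :
    D (∏ a ∈ s, g a) = ∑ b ∈ s, ∏ a ∈ s, Function.update g b (D (g b)) a := by
  induction s using Finset.induction_on with
  | empty => simp
  | insert i s hi ih =>
    rw [prod_insert hi, leibniz, ih, sum_insert hi, prod_insert hi, Function.update_self,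
      prod_update_of_notMem hi, smul_eq_mul, smul_eq_mul, mul_sum, add_comm, mul_comm]
    congr 1
    refine sum_congr rfl fun b hb => ?_
    rw [prod_insert hi, Function.update_of_ne (ne_of_mem_of_not_mem hb hi).symm]

theorem Fin.card_filter_cons_eq {m : ℕ} (b : ι) (e : Fin m → ι) (a : ι) :
    #{i | (Fin.cons b e : Fin (m + 1) → ι) i = a} = #{i | e i = a} + if b = a then 1 else 0 := by
  simp only [card_filter, Fin.sum_univ_succ, Fin.cons_zero, Fin.cons_succ]
  ring

theorem Derivation.iterate_map_prod_eq_sum_fiber [Fintype ι] (D : Derivation R A A) (f : ι → A)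
    (m : ℕ) :
    (⇑D)^[m] (∏ a, f a) = ∑ e : Fin m → ι, ∏ a, (⇑D)^[#{i | e i = a}] (f a) := by
  induction m with
  | zero => simp
  | succ m ih =>
    rw [Function.iterate_succ_apply', ih, map_sum,
      ← (Fin.consEquiv fun _ => ι).sum_comp, Fintype.sum_prod_type, sum_comm]
    refine sum_congr rfl fun e _ => ?_
    rw [map_prod_eq_sum_update]
    refine sum_congr rfl fun b _ => prod_congr rfl fun a _ => ?_
    simp only [Fin.consEquiv_apply, Fin.card_filter_cons_eq]
    rcases eq_or_ne a b with rfl | hab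
    · simp [Function.iterate_succ_apply']
    · simp [hab, hab.symm]

end Leibniz

theorem coeff_X_mul_derivative {R : Type*} [CommSemiring R] (f : R⟦X⟧) (n : ℕ) :
    coeff n (X * d⁄dX R f) = n * coeff n f := by
  rcases n with _ | n
  · simp
  · rw [coeff_succ_X_mul, coeff_derivative, mul_comm, Nat.cast_succ]

/-- The derivative in `x` at `x = 0` of Abel's sum
`∑ C(n,k) x (x+k)^(k-1) (y-k)^(n-k) = (x+y)^n`. -/
noncomputable def abelSum (n : ℕ) (y : ℝ) : ℝ :=
  ∑ k ∈ range n, (n.choose (k + 1) : ℝ) * (k + 1) ^ k * (y - (k + 1)) ^ (n - 1 - k)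

theorem hasDerivAt_abelSum (n : ℕ) (y : ℝ) :
    HasDerivAt (abelSum (n + 1)) ((n + 1) * abelSum n y) y := by
  have hterm : ∀ k ∈ range (n + 1), HasDerivAt
      (fun y : ℝ => ((n + 1).choose (k + 1) : ℝ) * (k + 1) ^ k * (y - (k + 1)) ^ (n + 1 - 1 - k))
      (((n + 1).choose (k + 1) : ℝ) * (k + 1) ^ k * ((n - k : ℕ) * (y - (k + 1)) ^ (n - 1 - k)))
      y := by
    intro k _
    have h := ((hasDerivAt_id y).sub_const ((k : ℝ) + 1)).pow (n - k)
    simp only [id, mul_one] at h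
    rw [show n - k - 1 = n - 1 - k by omega] at h
    exact h.const_mul _
  have hchoose (k : ℕ) :
      ((n + 1).choose (k + 1) : ℝ) * (n - k : ℕ) = (n + 1) * n.choose (k + 1) := by
    have h := Nat.choose_mul_succ_eq n (k + 1)
    rw [Nat.add_sub_add_right] at h
    exact_mod_cast h.symm.trans (mul_comm _ _)
  refine (HasDerivAt.fun_sum hterm).congr_deriv ?_
  rw [sum_range_succ, Nat.sub_self, cast_zero, zero_mul, mul_zero, add_zero, abelSum, mul_sum]
  refine sum_congr rfl fun k _ => ?_
  linear_combination (k + 1 : ℝ) ^ k * (y - (k + 1)) ^ (n - 1 - k) * hchoose k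

theorem abelSum_apply_zero (n : ℕ) : abelSum n 0 = n * 0 ^ (n - 1) := by
  rcases n with _ | n
  · simp [abelSum]
  have hΔ : ∑ j ∈ range (n + 2), (-1 : ℝ) ^ (n + 1 - j) * (n + 1).choose j * (j : ℝ) ^ n = 0 := by
    have h := congrFun (fwdDiff_iter_pow_eq_zero_of_lt (R := ℝ) (Nat.lt_succ_self n)) 0
    rw [fwdDiff_iter_eq_sum_shift] at h
    simpa [zsmul_eq_mul] using h
  rw [sum_range_succ'] at hΔ
  have hterm : ∀ k ∈ range (n + 1),
      ((n + 1).choose (k + 1) : ℝ) * (k + 1) ^ k * (0 - (k + 1)) ^ (n + 1 - 1 - k) =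
        (-1 : ℝ) ^ (n + 1 - (k + 1)) * (n + 1).choose (k + 1) * ((k + 1 : ℕ) : ℝ) ^ n := by
    intro k hk
    have hkn : k ≤ n := Nat.lt_succ_iff.mp (mem_range.mp hk)
    rw [Nat.add_sub_cancel, Nat.add_sub_add_right, zero_sub, neg_pow, Nat.cast_succ]
    calc _ = (-1 : ℝ) ^ (n - k) * (n + 1).choose (k + 1) * ((k + 1) ^ k * (k + 1) ^ (n - k)) := by
          ring
      _ = _ := by rw [← pow_add, Nat.add_sub_cancel' hkn]
  rw [abelSum, sum_congr rfl hterm, eq_neg_of_add_eq_zero_left hΔ]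
  rcases n with _ | n <;> simp

theorem abelSum_eq (n : ℕ) (y : ℝ) : abelSum n y = n * y ^ (n - 1) := by
  induction n generalizing y with
  | zero => simp [abelSum]
  | succ n ih =>
    have hdiff : ∀ z, HasDerivAt (fun z => abelSum (n + 1) z - (n + 1) * z ^ n) 0 z := fun z => by
      simpa [ih] using
        (hasDerivAt_abelSum n z).fun_sub ((hasDerivAt_pow n z).const_mul ((n : ℝ) + 1))
    have hconst := is_const_of_deriv_eq_zero (fun z => (hdiff z).differentiableAt)
      (fun z => (hdiff z).deriv) y 0
    simp only [abelSum_apply_zero] at hconst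
    push_cast at hconst ⊢
    linarith

noncomputable def selfPowSeries : ℝ⟦X⟧ := mk fun n => (n : ℝ) ^ n / n !

noncomputable def treeSeries : ℝ⟦X⟧ := X * mk fun n => ((n : ℝ) + 1) ^ n / (n + 1)!

theorem coeff_succ_treeSeries_mul_selfPowSeries (n : ℕ) :
    coeff (n + 1) (treeSeries * selfPowSeries) = coeff (n + 1) selfPowSeries := by
  rw [treeSeries, mul_assoc, coeff_succ_X_mul, coeff_mul, Nat.sum_antidiagonal_eq_sum_range_succ_mk]
  simp only [selfPowSeries, coeff_mk]
  have hterm : ∀ k ∈ range (n + 1),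
      ((k : ℝ) + 1) ^ k / (k + 1)! * (((n - k : ℕ) : ℝ) ^ (n - k) / (n - k)!) =
        (n + 1).choose (k + 1) * (k + 1) ^ k * (((n : ℝ) + 1) - (k + 1)) ^ (n + 1 - 1 - k) /
          (n + 1)! := by
    intro k hk
    have hkn : k ≤ n := Nat.lt_succ_iff.mp (mem_range.mp hk)
    rw [Nat.cast_choose ℝ (Nat.succ_le_succ hkn), Nat.succ_sub_succ, Nat.add_sub_cancel,
      Nat.cast_sub hkn]
    field_simp
    ring
  rw [sum_congr rfl hterm, ← sum_div, ← abelSum, abelSum_eq]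
  push_cast
  ring

theorem selfPowSeries_mul_one_sub_treeSeries : selfPowSeries * (1 - treeSeries) = 1 := by
  ext n
  rcases n with _ | n
  · simp [selfPowSeries, treeSeries]
  · rw [mul_sub, mul_one, map_sub, mul_comm, coeff_succ_treeSeries_mul_selfPowSeries, sub_self,
      coeff_one, if_neg n.succ_ne_zero]

theorem X_mul_derivative_treeSeries : X * d⁄dX ℝ treeSeries = selfPowSeries - 1 := by
  ext n
  rw [coeff_X_mul_derivative]
  rcases n with _ | n
  · simp [selfPowSeries]
  · rw [treeSeries, coeff_succ_X_mul, map_sub, coeff_one, if_neg n.succ_ne_zero, sub_zero,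
      selfPowSeries, coeff_mk, coeff_mk]
    push_cast
    ring

theorem X_mul_derivative_selfPowSeries :
    X * d⁄dX ℝ selfPowSeries = selfPowSeries ^ 3 - selfPowSeries ^ 2 := by
  set B := selfPowSeries
  set T := treeSeries
  have hB : d⁄dX ℝ B * (1 - T) = B * d⁄dX ℝ T := by
    have h := congrArg (d⁄dX ℝ) selfPowSeries_mul_one_sub_treeSeries
    rw [Derivation.leibniz, derivative_one, map_sub, derivative_one, smul_eq_mul, smul_eq_mul] at h
    linear_combination h
  calc X * d⁄dX ℝ B = X * d⁄dX ℝ B * (B * (1 - T)) := by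
        rw [selfPowSeries_mul_one_sub_treeSeries, mul_one]
    _ = B ^ 2 * (X * d⁄dX ℝ T) := by linear_combination X * B * hB
    _ = B ^ 3 - B ^ 2 := by rw [X_mul_derivative_treeSeries]; ring

theorem coeff_selfPowSeries_pow_add_three (m q : ℕ) :
    coeff m (selfPowSeries ^ (q + 3)) =
      coeff m (selfPowSeries ^ (q + 2)) +
        m / ((q : ℝ) + 1) * coeff m (selfPowSeries ^ (q + 1)) := by
  have h : X * d⁄dX ℝ (selfPowSeries ^ (q + 1)) =
      C ((q : ℝ) + 1) * (selfPowSeries ^ (q + 3) - selfPowSeries ^ (q + 2)) := by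
    rw [derivative_pow, Nat.add_sub_cancel, ← map_natCast (C (R := ℝ)), Nat.cast_succ]
    linear_combination C ((q : ℝ) + 1) * selfPowSeries ^ q * X_mul_derivative_selfPowSeries
  have hm := congrArg (coeff m) h
  rw [coeff_X_mul_derivative, coeff_C_mul, map_sub] at hm
  field_simp
  linear_combination -hm

theorem factorial_mul_coeff_selfPowSeries_pow (m Q : ℕ) :
    (m ! : ℝ) * coeff m (selfPowSeries ^ Q) =
      ∑ e : Fin m → Fin Q, ∏ a, (#{i | e i = a} : ℝ) ^ #{i | e i = a} := by
  rw [← constantCoeff_iterate_derivative, ← Fin.prod_const,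
    Derivation.iterate_map_prod_eq_sum_fiber, map_sum]
  refine sum_congr rfl fun e _ => ?_
  rw [map_prod]
  refine prod_congr rfl fun a _ => ?_
  rw [constantCoeff_iterate_derivative, selfPowSeries, coeff_mk]
  field_simp

theorem pow_mul_CMN (m Q : ℕ) :
    (m : ℝ) ^ m * CMN m Q = ∑ e : Fin m → Fin Q, ∏ a, (#{i | e i = a} : ℝ) ^ #{i | e i = a} := by
  rw [CMN, mul_sum]
  refine sum_congr rfl fun e _ => ?_
  have hfibers : ∑ a, #{i | e i = a} = m := by
    simpa using
      (card_eq_sum_card_fiberwise (s := univ) (t := univ) (f := e) fun _ _ => mem_univ _).symm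
  have hpow : (m : ℝ) ^ m = ∏ a, (m : ℝ) ^ #{i | e i = a} := by
    rw [prod_pow_eq_pow_sum, hfibers]
  rw [hpow, ← prod_mul_distrib]
  refine prod_congr rfl fun a _ => ?_
  have hle : #{i | e i = a} ≤ m := by simpa using card_le_univ {i | e i = a}
  rw [← mul_pow]
  rcases eq_or_ne m 0 with rfl | hm
  · rw [Nat.le_zero.mp hle, pow_zero, pow_zero]
  · rw [mul_div_cancel₀ _ (Nat.cast_ne_zero.mpr hm)]

theorem CMN_eq_factorial_div_mul_coeff (m Q : ℕ) :
    CMN m Q = m ! / m ^ m * coeff m (selfPowSeries ^ Q) := by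
  have hm : (m : ℝ) ^ m ≠ 0 := by exact_mod_cast Nat.pow_self_pos.ne'
  rw [div_mul_eq_mul_div, factorial_mul_coeff_selfPowSeries_pow, ← pow_mul_CMN,
    mul_div_cancel_left₀ _ hm]

theorem CMN_recursion (m : ℕ) :
    CMN m 1 = 1 ∧
    ∀ Q : ℕ, 3 ≤ Q →
      CMN m Q = CMN m (Q - 1) + ((m : ℝ) / ((Q : ℝ) - 2)) * CMN m (Q - 2) := by
  constructor
  · rw [CMN_eq_factorial_div_mul_coeff, pow_one, selfPowSeries, coeff_mk]
    have hm : (m : ℝ) ^ m ≠ 0 := by exact_mod_cast Nat.pow_self_pos.ne'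
    field_simp
  · intro Q hQ
    obtain ⟨q, rfl⟩ : ∃ q, Q = q + 3 := ⟨Q - 3, by omega⟩
    have hQ2 : ((q + 3 : ℕ) : ℝ) - 2 = q + 1 := by push_cast; ring
    rw [hQ2, show q + 3 - 1 = q + 2 by rfl, show q + 3 - 2 = q + 1 by rfl,
      CMN_eq_factorial_div_mul_coeff, CMN_eq_factorial_div_mul_coeff,
      CMN_eq_factorial_div_mul_coeff, coeff_selfPowSeries_pow_add_three]
    ring
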